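/- Every triangulable polynomial automorphism (i.e. one of the form T^{-1} ∘ F ∘ T with T linear invertible and F triangular) is nice. -/

import Mathlib

/-!
Conjugating by the linear change of variables `T` turns the sequence `P_k` of `G` into the
iterated difference operator `Δ p = p ∘ F - p` applied to linear forms, so it suffices that `Δ`
is locally nilpotent. For triangular `F` choose weights `w i = E ^ (n - i)`, with `E` exceeding
the total degree of every `F i - X i`; then `F i - X i` has weighted degree `< w i`, and the
twisted Leibniz rule `Δ (p * q) = Δ p * (q ∘ F) + p * Δ q` shows that `Δ` strictly lowers the
weighted degree.
-/

open MvPolynomial Finset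

noncomputable def seqP {K : Type*} [Field K] {n : ℕ}
    (F : Fin n → MvPolynomial (Fin n) K) : ℕ → Fin n → MvPolynomial (Fin n) K
  | 0 => fun i => X i
  | k + 1 => fun i => bind₁ F (seqP F k i) - seqP F k i

/-- Composition of polynomial maps: `(polyComp F G)(x) = F(G(x))`. -/
noncomputable def polyComp {K : Type*} [Field K] {n : ℕ}
    (F G : Fin n → MvPolynomial (Fin n) K) : Fin n → MvPolynomial (Fin n) K :=
  fun i => bind₁ G (F i)

/-- The polynomial map associated to a matrix `T`. -/
noncomputable def linMap {K : Type*} [Field K] {n : ℕ}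
    (T : Matrix (Fin n) (Fin n) K) : Fin n → MvPolynomial (Fin n) K :=
  fun i => ∑ j, T i j • X j

namespace MvPolynomial

variable {σ R : Type*}

section WeightedDegreeLT

variable [CommSemiring R]

noncomputable def weightedDegreeLT (w : σ → ℕ) (a : ℕ) : Submodule R (MvPolynomial σ R) :=
  restrictSupport R {m | Finsupp.weight w m < a}

variable {w : σ → ℕ}

theorem mem_weightedDegreeLT {a : ℕ} {p : MvPolynomial σ R} :
    p ∈ weightedDegreeLT w a ↔ ∀ m ∈ p.support, Finsupp.weight w m < a :=
  Iff.rfl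

theorem weightedDegreeLT_mono {a b : ℕ} (h : a ≤ b) :
    weightedDegreeLT (R := R) w a ≤ weightedDegreeLT w b :=
  restrictSupport_mono R fun _ hm => lt_of_lt_of_le hm h

theorem weightedDegreeLT_zero : weightedDegreeLT (R := R) w 0 = ⊥ := by
  ext p
  simp [mem_weightedDegreeLT, ← support_eq_empty, Finset.eq_empty_iff_forall_notMem]

theorem mem_weightedDegreeLT_weightedTotalDegree_succ (p : MvPolynomial σ R) :
    p ∈ weightedDegreeLT w (weightedTotalDegree w p + 1) :=
  fun _ hm => Nat.lt_succ_of_le (le_weightedTotalDegree w hm)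

theorem monomial_mem_weightedDegreeLT_succ (m : σ →₀ ℕ) (r : R) :
    monomial m r ∈ weightedDegreeLT w (Finsupp.weight w m + 1) :=
  (monomial_mem_restrictSupport R).2 (.inl (Nat.lt_succ_self _))

theorem mul_mem_weightedDegreeLT {p q : MvPolynomial σ R} {a b : ℕ}
    (hp : p ∈ weightedDegreeLT w a) (hq : q ∈ weightedDegreeLT w (b + 1)) :
    p * q ∈ weightedDegreeLT w (a + b) := by
  classical
  intro m hm
  obtain ⟨m₁, hm₁, m₂, hm₂, rfl⟩ := Finset.mem_add.1 (support_mul p q hm)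
  have h₁ := hp hm₁
  have h₂ := hq hm₂
  simp only [Set.mem_ofPred_eq, map_add] at h₁ h₂ ⊢
  omega

theorem weight_le_totalDegree_mul {s : Set σ} {p : MvPolynomial σ R} (hp : p ∈ supported R s)
    {c : ℕ} (hc : ∀ j ∈ s, w j ≤ c) {m : σ →₀ ℕ} (hm : m ∈ p.support) :
    Finsupp.weight w m ≤ p.totalDegree * c :=
  calc Finsupp.weight w m = ∑ j ∈ m.support, m j * w j := by
        simp [Finsupp.weight_apply, Finsupp.sum]
    _ ≤ ∑ j ∈ m.support, m j * c := Finset.sum_le_sum fun j hj => Nat.mul_le_mul_left _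
        (hc j (mem_supported.1 hp ((mem_vars_iff_mem_support j).2 ⟨m, hm, hj⟩)))
    _ = (m.sum fun _ e => e) * c := by rw [Finsupp.sum, Finset.sum_mul]
    _ ≤ p.totalDegree * c := Nat.mul_le_mul_right _ (le_totalDegree hm)

end WeightedDegreeLT

section Difference

variable [CommRing R]

noncomputable def difference (F : σ → MvPolynomial σ R) :
    MvPolynomial σ R →ₗ[R] MvPolynomial σ R :=
  (bind₁ F).toLinearMap - LinearMap.id

variable {F : σ → MvPolynomial σ R} {w : σ → ℕ}

@[simp]
theorem difference_apply (p : MvPolynomial σ R) : difference F p = bind₁ F p - p :=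
  rfl

theorem difference_mul (p q : MvPolynomial σ R) :
    difference F (p * q) = difference F p * bind₁ F q + p * difference F q := by
  simp only [difference_apply, map_mul]
  ring

theorem difference_mul_mem_weightedDegreeLT {p q : MvPolynomial σ R} {a b : ℕ}
    (hp : p ∈ weightedDegreeLT w (a + 1)) (hdp : difference F p ∈ weightedDegreeLT w a)
    (hq : q ∈ weightedDegreeLT w (b + 1)) (hdq : difference F q ∈ weightedDegreeLT w b) :
    difference F (p * q) ∈ weightedDegreeLT w (a + b) := by
  have hFq : bind₁ F q ∈ weightedDegreeLT w (b + 1) := by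
    rw [← sub_add_cancel (bind₁ F q) q, ← difference_apply]
    exact add_mem (weightedDegreeLT_mono b.le_succ hdq) hq
  rw [difference_mul, mul_comm p]
  exact add_mem (mul_mem_weightedDegreeLT hdp hFq)
    (add_comm b a ▸ mul_mem_weightedDegreeLT hdq hp)

theorem difference_monomial_mem_weightedDegreeLT
    (hF : ∀ i, F i - X i ∈ weightedDegreeLT w (w i)) (m : σ →₀ ℕ) :
    difference F (monomial m 1) ∈ weightedDegreeLT w (Finsupp.weight w m) := by
  let S : AddSubmonoid (σ →₀ ℕ) :=
    { carrier := {m | difference F (monomial m 1) ∈ weightedDegreeLT w (Finsupp.weight w m)}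
      zero_mem' := by simp
      add_mem' := fun {m m'} hm hm' => by
        rw [Set.mem_ofPred_eq, ← mul_one (1 : R), ← monomial_mul, map_add]
        exact difference_mul_mem_weightedDegreeLT (monomial_mem_weightedDegreeLT_succ m 1) hm
          (monomial_mem_weightedDegreeLT_succ m' 1) hm' }
  have hX (i : σ) : Finsupp.single i 1 ∈ S := by
    change difference F (X i) ∈ weightedDegreeLT w (Finsupp.weight w (Finsupp.single i 1))
    simpa [Finsupp.weight_single] using hF i
  change m ∈ S
  induction m using Finsupp.induction with
  | zero => exact S.zero_mem
  | single_add i b f _ _ ih =>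
    exact S.add_mem (Finsupp.smul_single_one i b ▸ S.nsmul_mem (hX i) b) ih

theorem weightedDegreeLT_succ_le_comap_difference
    (hF : ∀ i, F i - X i ∈ weightedDegreeLT w (w i)) (a : ℕ) :
    weightedDegreeLT w (a + 1) ≤ (weightedDegreeLT w a).comap (difference F) := by
  rw [weightedDegreeLT, restrictSupport_eq_span, Submodule.span_le]
  rintro _ ⟨m, hm, rfl⟩
  exact weightedDegreeLT_mono (Nat.lt_succ_iff.1 hm)
    (difference_monomial_mem_weightedDegreeLT hF m)

theorem iterate_difference_eq_zero (hF : ∀ i, F i - X i ∈ weightedDegreeLT w (w i)) {a : ℕ}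
    {p : MvPolynomial σ R} (hp : p ∈ weightedDegreeLT w a) : (difference F)^[a] p = 0 := by
  induction a generalizing p with
  | zero => simpa [weightedDegreeLT_zero] using hp
  | succ a ih =>
    rw [Function.iterate_succ_apply]
    exact ih (weightedDegreeLT_succ_le_comap_difference hF a hp)

end Difference

section Triangular

variable [CommRing R] {n : ℕ} {F : Fin n → MvPolynomial (Fin n) R}

theorem exists_sub_X_mem_weightedDegreeLT_of_triangular
    (htri : ∀ i, F i - X i ∈ supported R {j : Fin n | i < j}) :
    ∃ w : Fin n → ℕ, ∀ i, F i - X i ∈ weightedDegreeLT w (w i) := by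
  set E := univ.sup (fun i => (F i - X i).totalDegree) + 1
  have hE : 0 < E := Nat.succ_pos _
  refine ⟨fun i => E ^ (n - i), fun i m hm => ?_⟩
  have hc : ∀ j ∈ {j : Fin n | i < j}, E ^ (n - j) ≤ E ^ (n - (i + 1 : ℕ)) := fun j hj =>
    Nat.pow_le_pow_right hE (by simp only [Set.mem_ofPred_eq, Fin.lt_def] at hj; omega)
  calc Finsupp.weight _ m ≤ (F i - X i).totalDegree * E ^ (n - (i + 1 : ℕ)) :=
        weight_le_totalDegree_mul (htri i) hc hm
    _ < E * E ^ (n - (i + 1 : ℕ)) :=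
        Nat.mul_lt_mul_of_pos_right
          (Nat.lt_succ_of_le (le_sup (f := fun i => (F i - X i).totalDegree) (mem_univ i)))
          (pow_pos hE _)
    _ = E ^ (n - i) := by rw [← pow_succ']; congr 1; omega

theorem exists_iterate_difference_eq_zero_of_triangular
    (htri : ∀ i, F i - X i ∈ supported R {j : Fin n | i < j})
    {ι : Type*} [Fintype ι] (P : ι → MvPolynomial (Fin n) R) :
    ∃ k, ∀ i, (difference F)^[k] (P i) = 0 := by
  obtain ⟨w, hw⟩ := exists_sub_X_mem_weightedDegreeLT_of_triangular htri
  refine ⟨univ.sup (fun i => weightedTotalDegree w (P i)) + 1, fun i =>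
    iterate_difference_eq_zero hw (weightedDegreeLT_mono ?_
      (mem_weightedDegreeLT_weightedTotalDegree_succ (P i)))⟩
  exact Nat.succ_le_succ (le_sup (f := fun i => weightedTotalDegree w (P i)) (mem_univ i))

end Triangular

section Conjugation

variable {K : Type*} [Field K] {n : ℕ}

theorem bind₁_polyComp (F G : Fin n → MvPolynomial (Fin n) K) :
    bind₁ (polyComp F G) = (bind₁ G).comp (bind₁ F) :=
  (bind₁_comp_bind₁ F G).symm

theorem semiconj_difference_polyComp {F P Q : Fin n → MvPolynomial (Fin n) K}
    (hQP : polyComp Q P = X) :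
    Function.Semiconj (bind₁ Q) (difference F) (difference (polyComp P (polyComp F Q))) := by
  intro p
  have hPQp : bind₁ P (bind₁ Q p) = p := by
    rw [← AlgHom.comp_apply, ← bind₁_polyComp, hQP, bind₁_X_left, AlgHom.id_apply]
  simp only [difference_apply, bind₁_polyComp, AlgHom.comp_apply, hPQp, map_sub]

theorem seqP_eq_iterate_difference (G : Fin n → MvPolynomial (Fin n) K) (k : ℕ) (i : Fin n) :
    seqP G k i = (difference G)^[k] (X i) := by
  induction k with
  | zero => rfl
  | succ k ih => rw [Function.iterate_succ_apply', ← ih, difference_apply]; rfl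

theorem polyComp_linMap (M N : Matrix (Fin n) (Fin n) K) :
    polyComp (linMap M) (linMap N) = linMap (M * N) := by
  funext i
  simp only [polyComp, linMap, map_sum, map_smul, bind₁_X_right, Finset.smul_sum, smul_smul,
    Matrix.mul_apply, Finset.sum_smul]
  exact Finset.sum_comm

theorem linMap_one : linMap (1 : Matrix (Fin n) (Fin n) K) = X := by
  funext i
  simp [linMap, Matrix.one_apply]

end Conjugation

end MvPolynomial

theorem stmt3_general {K : Type*} [Field K] {n : ℕ}
    (F : Fin n → MvPolynomial (Fin n) K)
    (htri : ∀ i, F i - X i ∈ MvPolynomial.supported K {j : Fin n | i < j})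
    (T : GL (Fin n) K)
    (G : Fin n → MvPolynomial (Fin n) K)
    (hG : G = polyComp (linMap (↑T⁻¹ : Matrix (Fin n) (Fin n) K))
      (polyComp F (linMap (↑T : Matrix (Fin n) (Fin n) K)))) :
    ∃ m, ∀ i, seqP G m i = 0 := by
  set P := linMap (↑T⁻¹ : Matrix (Fin n) (Fin n) K)
  set Q := linMap (↑T : Matrix (Fin n) (Fin n) K)
  have hPQ : polyComp P Q = X := by
    rw [polyComp_linMap, ← Units.val_mul, inv_mul_cancel, Units.val_one, linMap_one]
  have hQP : polyComp Q P = X := by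
    rw [polyComp_linMap, ← Units.val_mul, mul_inv_cancel, Units.val_one, linMap_one]
  obtain ⟨k, hk⟩ := exists_iterate_difference_eq_zero_of_triangular htri P
  refine ⟨k, fun i => ?_⟩
  rw [seqP_eq_iterate_difference, ← congrFun hPQ i, hG, polyComp,
    ← (semiconj_difference_polyComp hQP).iterate_right k (P i), hk i, map_zero]

/-- Every triangulable polynomial automorphism, i.e. one of the form
`T⁻¹ ∘ F ∘ T` with `T` linear invertible and `F` triangular, is nice. -/
theorem stmt3 {K : Type*} [Field K] [CharZero K] {n : ℕ}
    (F : Fin n → MvPolynomial (Fin n) K)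
    (htri : ∀ i, F i - X i ∈ MvPolynomial.supported K {j : Fin n | i < j})
    (hlast : ∀ i : Fin n, (i : ℕ) = n - 1 → F i = X i)
    (T : GL (Fin n) K)
    (G : Fin n → MvPolynomial (Fin n) K)
    (hG : G = polyComp (linMap (↑T⁻¹ : Matrix (Fin n) (Fin n) K))
      (polyComp F (linMap (↑T : Matrix (Fin n) (Fin n) K)))) :
    ∃ m, ∀ i, seqP G m i = 0 :=
  stmt3_general F htri T G hG
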